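/- Assume the associated normalized rank-2 bundle is unstable, i.e. N_{m−1} ≠ 0 if a−b is even, respectively N_m ≠ 0 if a−b is odd, and let k = max{ j ∈ ℤ : N_{m−j} ≠ 0 }. Then every nonzero element s = (s_1, …, s_{n+2}) ∈ N_{m−k} is a regular section: the homogeneous polynomials s_1, …, s_{n+2} have no common nonconstant factor, equivalently their common zero locus in P^2 is finite (of codimension at least 2). -/

import Mathlib

open MvPolynomial

noncomputable section

variable {K : Type*} [Field K]

/-- `p` is homogeneous of (integer) degree `d`; for `d < 0` this forces `p = 0`. -/
def homog (p : MvPolynomial (Fin 3) K) (d : ℤ) : Prop :=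
  IsWeightedHomogeneous (fun _ : Fin 3 => (1 : ℤ)) p d

/-- The degree-`d` graded piece of `⊕_{i=1}^{N} R(-a i)`, as a `K`-subspace of
`Fin N → R`, `R = K[x,y,z]`. -/
def degPiece (N : ℕ) (a : Fin N → ℤ) (d : ℤ) :
    Submodule K (Fin N → MvPolynomial (Fin 3) K) :=
  Submodule.pi Set.univ fun i =>
    weightedHomogeneousSubmodule K (fun _ : Fin 3 => (1 : ℤ)) (d - a i)

lemma mem_degPiece {N : ℕ} {a : Fin N → ℤ} {d : ℤ} {v : Fin N → MvPolynomial (Fin 3) K} :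
    v ∈ degPiece (K := K) N a d ↔ ∀ i, homog (v i) (d - a i) := by
  simp [degPiece, Submodule.mem_pi, mem_weightedHomogeneousSubmodule, homog]

/-- The map `φ : ⊕ R(-a i) → ⊕ R(-b j)` given by the matrix `Φ`, as a `K`-linear map. -/
def phiK (n : ℕ) (Φ : Matrix (Fin n) (Fin (n + 2)) (MvPolynomial (Fin 3) K)) :
    (Fin (n + 2) → MvPolynomial (Fin 3) K) →ₗ[K] (Fin n → MvPolynomial (Fin 3) K) :=
  (Matrix.mulVecLin Φ).restrictScalars K

/-- The degree-`d` graded piece of `N = ker φ`. -/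
def Nd (n : ℕ) (a : Fin (n + 2) → ℤ) (Φ : Matrix (Fin n) (Fin (n + 2)) (MvPolynomial (Fin 3) K))
    (d : ℤ) : Submodule K (Fin (n + 2) → MvPolynomial (Fin 3) K) :=
  degPiece (n + 2) a d ⊓ LinearMap.ker (phiK n Φ)

/-- The image of the degree-`d` piece of `F` inside the degree-`d` piece of `G`,
viewed as a subspace of the latter. -/
def MdSub (n : ℕ) (a : Fin (n + 2) → ℤ) (b : Fin n → ℤ)
    (Φ : Matrix (Fin n) (Fin (n + 2)) (MvPolynomial (Fin 3) K)) (d : ℤ) :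
    Submodule K ↥(degPiece (K := K) n b d) :=
  Submodule.comap (degPiece (K := K) n b d).subtype
    (Submodule.map (phiK n Φ) (degPiece (n + 2) a d))

/-- The degree-`d` graded piece of `M = coker φ`. -/
abbrev Md (n : ℕ) (a : Fin (n + 2) → ℤ) (b : Fin n → ℤ)
    (Φ : Matrix (Fin n) (Fin (n + 2)) (MvPolynomial (Fin 3) K)) (d : ℤ) :=
  ↥(degPiece (K := K) n b d) ⧸ MdSub n a b Φ d

/-- Multiplication by `L` on tuples of polynomials, as a `K`-linear map. -/
def mulL (N : ℕ) (L : MvPolynomial (Fin 3) K) :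
    (Fin N → MvPolynomial (Fin 3) K) →ₗ[K] (Fin N → MvPolynomial (Fin 3) K) :=
  ((LinearMap.lsmul (MvPolynomial (Fin 3) K) (Fin N → MvPolynomial (Fin 3) K)) L).restrictScalars K

lemma mulL_apply {N : ℕ} (L : MvPolynomial (Fin 3) K) (v : Fin N → MvPolynomial (Fin 3) K) :
    mulL N L v = L • v := rfl

lemma mulL_mem {N : ℕ} {a : Fin N → ℤ} {L : MvPolynomial (Fin 3) K} (hL : homog L 1)
    {d : ℤ} {v : Fin N → MvPolynomial (Fin 3) K} (hv : v ∈ degPiece (K := K) N a (d - 1)) :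
    mulL N L v ∈ degPiece (K := K) N a d := by
  rw [mem_degPiece] at hv ⊢
  intro i
  have h := hL.mul (hv i)
  have e : (1 : ℤ) + (d - 1 - a i) = d - a i := by ring
  rw [e] at h
  simpa [mulL_apply, smul_eq_mul, homog] using h

/-- Multiplication by `L` from the degree-`d-1` piece of `G` to the degree-`d` piece. -/
def mulLres (n : ℕ) (b : Fin n → ℤ) (L : MvPolynomial (Fin 3) K) (hL : homog L 1) (d : ℤ) :
    ↥(degPiece (K := K) n b (d - 1)) →ₗ[K] ↥(degPiece (K := K) n b d) :=
  (mulL n L).restrict fun _ hv => mulL_mem hL hv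

lemma mulLres_comap (n : ℕ) (a : Fin (n + 2) → ℤ) (b : Fin n → ℤ)
    (Φ : Matrix (Fin n) (Fin (n + 2)) (MvPolynomial (Fin 3) K))
    (L : MvPolynomial (Fin 3) K) (hL : homog L 1) (d : ℤ) :
    MdSub n a b Φ (d - 1) ≤ Submodule.comap (mulLres n b L hL d) (MdSub n a b Φ d) := by
  rintro ⟨w, hw⟩ hmem
  obtain ⟨v, hv, hφv⟩ := hmem
  refine ⟨mulL (n + 2) L v, mulL_mem hL hv, ?_⟩
  show phiK n Φ (mulL (n + 2) L v) = ((mulLres n b L hL d) ⟨w, hw⟩ : Fin n → MvPolynomial (Fin 3) K)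
  have : phiK n Φ (mulL (n + 2) L v) = L • phiK n Φ v := by
    simp [phiK, mulL_apply]
  rw [this, hφv]
  rfl

/-- The map induced by multiplication by `L` from `M_{d-1}` to `M_d`,
where `M = coker φ`. -/
def mulLmap (n : ℕ) (a : Fin (n + 2) → ℤ) (b : Fin n → ℤ)
    (Φ : Matrix (Fin n) (Fin (n + 2)) (MvPolynomial (Fin 3) K))
    (L : MvPolynomial (Fin 3) K) (hL : homog L 1) (d : ℤ) :
    Md n a b Φ (d - 1) →ₗ[K] Md n a b Φ d :=
  Submodule.mapQ (MdSub n a b Φ (d - 1)) (MdSub n a b Φ d) (mulLres n b L hL d)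
    (mulLres_comap n a b Φ L hL d)

/-- The linear form with coefficient vector `c`. -/
def linform (c : Fin 3 → K) : MvPolynomial (Fin 3) K := ∑ i, C (c i) * X i

lemma homog_linform (c : Fin 3 → K) : homog (linform c) 1 := by
  rw [homog, ← mem_weightedHomogeneousSubmodule]
  refine sum_mem fun i _ => ?_
  rw [mem_weightedHomogeneousSubmodule]
  simpa using (isWeightedHomogeneous_C (fun _ : Fin 3 => (1 : ℤ)) (c i)).mul
    (isWeightedHomogeneous_X K (fun _ : Fin 3 => (1 : ℤ)) i)

/-- Finite length of `coker φ`: all sufficiently high graded pieces vanish. -/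
def FiniteColength (n : ℕ) (a : Fin (n + 2) → ℤ) (b : Fin n → ℤ)
    (Φ : Matrix (Fin n) (Fin (n + 2)) (MvPolynomial (Fin 3) K)) : Prop :=
  ∃ D : ℤ, ∀ d : ℤ, D ≤ d →
    degPiece (K := K) n b d ≤ Submodule.map (phiK n Φ) (degPiece (n + 2) a d)

end

/-!
If a nonunit `q` divided every `s_i`, it would be homogeneous of some degree `e ≥ 1` (a factor of
a nonzero homogeneous polynomial over a domain is homogeneous), and the cofactor `t = s / q`
would be a nonzero element of `N_{m-k-e}`, since `0 = φ(s) = q • φ(t)` and `R` is a domain. This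
contradicts the maximality of `k`.
-/

lemma Finsupp.weight_one_int_eq_degree {σ : Type*} (d : σ →₀ ℕ) :
    Finsupp.weight (fun _ : σ => (1 : ℤ)) d = d.degree := by
  simp [Finsupp.weight_apply, Finsupp.sum, Finsupp.degree_apply]

namespace MvPolynomial

variable {σ R : Type*}

lemma order_coe_le_totalDegree [CommSemiring R] {p : MvPolynomial σ R} (hp : p ≠ 0) :
    (p : MvPowerSeries σ R).order ≤ p.totalDegree := by
  obtain ⟨d, hd, hdeg⟩ := Finset.exists_mem_eq_sup p.support (support_nonempty.mpr hp)
    Finsupp.degree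
  calc (p : MvPowerSeries σ R).order ≤ d.degree :=
        MvPowerSeries.order_le (by rwa [coeff_coe, ← mem_support_iff])
    _ = p.totalDegree := by rw [← hdeg]; rfl

lemma IsHomogeneous.order_coe [CommSemiring R] {p : MvPolynomial σ R} {n : ℕ}
    (hp : p.IsHomogeneous n) (hp0 : p ≠ 0) : (p : MvPowerSeries σ R).order = n := by
  refine le_antisymm ?_ (MvPowerSeries.nat_le_order fun d hd => ?_)
  · simpa [hp.totalDegree hp0] using order_coe_le_totalDegree hp0
  · rw [coeff_coe]
    exact hp.coeff_eq_zero hd.ne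

/-- The order (lowest degree) and the total degree are both additive over a domain and agree on
`p`, so they agree on every factor of `p`. -/
theorem IsHomogeneous.of_dvd [CommRing R] [IsDomain R] {p q : MvPolynomial σ R} {n : ℕ}
    (hp : p.IsHomogeneous n) (hp0 : p ≠ 0) (hqp : q ∣ p) : q.IsHomogeneous q.totalDegree := by
  obtain ⟨r, rfl⟩ := hqp
  have hq0 := left_ne_zero_of_mul hp0
  have hr0 := right_ne_zero_of_mul hp0
  have hsum : (q : MvPowerSeries σ R).order + (r : MvPowerSeries σ R).order =
      ((q.totalDegree + r.totalDegree : ℕ) : ℕ∞) := by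
    rw [← MvPowerSeries.order_mul, ← coe_mul, hp.order_coe hp0, ← hp.totalDegree hp0,
      totalDegree_mul_of_isDomain hq0 hr0]
  have hq := order_coe_le_totalDegree hq0
  have hr := order_coe_le_totalDegree hr0
  have hord : (q : MvPowerSeries σ R).order = q.totalDegree := by
    lift (q : MvPowerSeries σ R).order to ℕ using ne_top_of_le_ne_top (ENat.natCast_ne_top _) hq
      with a
    lift (r : MvPowerSeries σ R).order to ℕ using ne_top_of_le_ne_top (ENat.natCast_ne_top _) hr
      with b
    norm_cast at hsum hq hr ⊢
    omega
  intro d hd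
  rw [Pi.one_def, ← Finsupp.degree_eq_weight_one]
  refine le_antisymm (le_totalDegree (mem_support_iff.mpr hd)) ?_
  exact_mod_cast hord ▸ MvPowerSeries.order_le (by rwa [coeff_coe])

lemma totalDegree_pos_of_not_isUnit {K : Type*} [Field K] {q : MvPolynomial σ K}
    (hq0 : q ≠ 0) (hq : ¬IsUnit q) : 0 < q.totalDegree := by
  refine Nat.pos_of_ne_zero fun h => hq ?_
  rw [isUnit_iff_totalDegree_of_isReduced, isUnit_iff_ne_zero]
  refine ⟨fun h0 => hq0 ?_, h⟩
  rw [totalDegree_eq_zero_iff_eq_C.mp h, h0, map_zero]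

end MvPolynomial

section Graded

variable {K : Type*} [Field K]

lemma homog.isHomogeneous_toNat {p : MvPolynomial (Fin 3) K} {d : ℤ} (hp : homog p d) :
    p.IsHomogeneous d.toNat := by
  intro e he
  have := hp he
  rw [Finsupp.weight_one_int_eq_degree] at this
  rw [Pi.one_def, ← Finsupp.degree_eq_weight_one]
  omega

lemma homog_natCast_iff {p : MvPolynomial (Fin 3) K} {n : ℕ} :
    homog p n ↔ p.IsHomogeneous n := by
  refine forall₂_congr fun e _ => ?_
  rw [Finsupp.weight_one_int_eq_degree, Nat.cast_inj, Pi.one_def, ← Finsupp.degree_eq_weight_one]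

lemma homog.of_mul_left {q t : MvPolynomial (Fin 3) K} {e d : ℤ} (hq : homog q e) (hq0 : q ≠ 0)
    (hqt : homog (q * t) d) : homog t (d - e) := by
  by_cases ht0 : t = 0
  · rw [ht0]
    exact isWeightedHomogeneous_zero _ _ _
  have hqt0 := mul_ne_zero hq0 ht0
  have ht := hqt.isHomogeneous_toNat.of_dvd hqt0 (dvd_mul_left t q)
  have hd : d = e + t.totalDegree :=
    IsWeightedHomogeneous.inj_right hqt0 hqt (hq.mul (homog_natCast_iff.mpr ht))
  rw [hd, add_sub_cancel_left]
  exact homog_natCast_iff.mpr ht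

lemma mem_Nd_of_eq_mul {n : ℕ} {a : Fin (n + 2) → ℤ}
    {Φ : Matrix (Fin n) (Fin (n + 2)) (MvPolynomial (Fin 3) K)} {d : ℤ}
    {s t : Fin (n + 2) → MvPolynomial (Fin 3) K} {q : MvPolynomial (Fin 3) K}
    (hs : s ∈ Nd n a Φ d) (hs0 : s ≠ 0) (hst : ∀ i, s i = q * t i) :
    t ∈ Nd n a Φ (d - q.totalDegree) := by
  obtain ⟨hsdeg, hsker⟩ := hs
  rw [SetLike.mem_coe, mem_degPiece] at hsdeg
  obtain ⟨i₀, hi₀⟩ := Function.ne_iff.mp hs0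
  have hq0 : q ≠ 0 := by
    rintro rfl
    simp [hst] at hi₀
  have hq : homog q q.totalDegree := homog_natCast_iff.mpr
    ((hsdeg i₀).isHomogeneous_toNat.of_dvd hi₀ ⟨t i₀, hst i₀⟩)
  have hs_eq : s = q • t := funext hst
  refine ⟨mem_degPiece.mpr fun i => ?_, ?_⟩
  · rw [sub_right_comm]
    exact hq.of_mul_left hq0 (hst i ▸ hsdeg i)
  · have : q • phiK n Φ t = 0 := by
      rw [← hsker, hs_eq, phiK, LinearMap.restrictScalars_apply, LinearMap.restrictScalars_apply,
        map_smul]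
    exact (smul_eq_zero.mp this).resolve_left hq0

end Graded

theorem statement10_general {K : Type*} [Field K]
    (n : ℕ) (a : Fin (n + 2) → ℤ)
    (Φ : Matrix (Fin n) (Fin (n + 2)) (MvPolynomial (Fin 3) K))
    (m : ℤ)
    (k : ℤ) (hk₂ : ∀ j : ℤ, Nd n a Φ (m - j) ≠ ⊥ → j ≤ k) :
    ∀ s : Fin (n + 2) → MvPolynomial (Fin 3) K, s ∈ Nd n a Φ (m - k) → s ≠ 0 →
      ∀ q : MvPolynomial (Fin 3) K, (∀ i, q ∣ s i) → IsUnit q := by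
  intro s hs hs0 q hdvd
  by_contra hq
  choose t hst using hdvd
  have hq0 : q ≠ 0 := by
    rintro rfl
    exact hs0 (funext fun i => by simp [hst i])
  have ht0 : t ≠ 0 := by
    rintro rfl
    exact hs0 (funext fun i => by simp [hst i])
  have ht : t ∈ Nd n a Φ (m - (k + q.totalDegree)) := by
    rw [← sub_sub]
    exact mem_Nd_of_eq_mul hs hs0 hst
  have := hk₂ _ ((Submodule.ne_bot_iff _).mpr ⟨t, ht, ht0⟩)
  have := totalDegree_pos_of_not_isUnit hq0 hq
  omega

/-- Suppose the associated normalized rank-2 bundle is unstable, i.e.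
`N_{m-1} ≠ 0` if `a - b = 2m` is even, resp. `N_m ≠ 0` if `a - b = 2m + 1` is odd, and let
`k = max{ j : N_{m-j} ≠ 0 }`. Then every nonzero element `s = (s_1, …, s_{n+2}) ∈ N_{m-k}` is
a regular section: the polynomials `s_i` have no common nonconstant factor. -/
theorem statement10 {K : Type*} [Field K] [IsAlgClosed K] [CharZero K]
    (n : ℕ) (a : Fin (n + 2) → ℤ) (b : Fin n → ℤ)
    (Φ : Matrix (Fin n) (Fin (n + 2)) (MvPolynomial (Fin 3) K))
    (hΦ : ∀ j i, homog (Φ j i) (a i - b j))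
    (hfin : FiniteColength n a b Φ)
    (m : ℤ)
    (hunstable : ((∑ i, a i) - (∑ j, b j) = 2 * m ∧ Nd n a Φ (m - 1) ≠ ⊥) ∨
      ((∑ i, a i) - (∑ j, b j) = 2 * m + 1 ∧ Nd n a Φ m ≠ ⊥))
    (k : ℤ) (hk₁ : Nd n a Φ (m - k) ≠ ⊥) (hk₂ : ∀ j : ℤ, Nd n a Φ (m - j) ≠ ⊥ → j ≤ k) :
    ∀ s : Fin (n + 2) → MvPolynomial (Fin 3) K, s ∈ Nd n a Φ (m - k) → s ≠ 0 →
      ∀ q : MvPolynomial (Fin 3) K, (∀ i, q ∣ s i) → IsUnit q :=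
  statement10_general n a Φ m k hk₂
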